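/- Let S be a yoked commutative semiring whose maximal ideals are subtractive, M a cancellative faithful multiplication S-semimodule, and p a prime ideal of S. If a ∈ S and x ∈ M satisfy ax ∈ pM, then a ∈ p or x ∈ pM. -/

import Mathlib

/-!
Suppose `a ∉ p` and `x ∉ pM`, and choose a maximal ideal `q` containing `(pM : x)`. In a
multiplication semimodule either some `s ∉ q` maps `M` into a cyclic submodule `Sw`, or `M = qM`.
In the first case, writing `sx = cw`, the relation `a c w = s a x ∈ p w` passes to
`s a c ∈ p` (yokedness and cancellation turn an equality `αw = βw` into `tw = 0` with
`α + t = β` or `β + t = α`, and faithfulness gives `ts = 0`), so `sc ∈ p` and `s² ∈ (pM : x) ⊆ q`.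
In the second case `Sx = q(Sx)`, so `x = ux` with `u ∈ q`; the same trick produces `t` with
`tx = 0` and `1 + t = u` or `u + t = 1`, and `t ∈ (pM : x) ⊆ q` forces `1 ∈ q` because `q` is
subtractive.
-/

open Submodule

def IsYoked (S : Type*) [Add S] : Prop :=
  ∀ a b : S, ∃ t : S, a + t = b ∨ b + t = a

def Ideal.IsSubtractive {S : Type*} [Semiring S] (I : Ideal S) : Prop :=
  ∀ a b : S, a + b ∈ I → b ∈ I → a ∈ I

def Module.IsMultiplication (S M : Type*) [CommSemiring S] [AddCommMonoid M] [Module S M] :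
    Prop :=
  ∀ N : Submodule S M, ∃ I : Ideal S, N = I • (⊤ : Submodule S M)

section

variable {S M : Type*} [CommSemiring S] [AddCommMonoid M] [Module S M]

theorem IsYoked.exists_smul_eq_zero_of_smul_eq [IsLeftCancelAdd M] (hS : IsYoked S)
    {a b : S} {w : M} (h : a • w = b • w) : ∃ t : S, t • w = 0 ∧ (a + t = b ∨ b + t = a) := by
  obtain ⟨t, ht⟩ := hS a b
  refine ⟨t, ?_, ht⟩
  rcases ht with ht | ht
  · apply add_left_cancel (a := a • w)
    rw [add_zero, ← add_smul, ht, h]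
  · apply add_left_cancel (a := b • w)
    rw [add_zero, ← add_smul, ht, h]

theorem mul_eq_zero_of_smul_eq_zero_of_forall_smul_mem_span
    (hfaith : ∀ t : S, (∀ x : M, t • x = 0) → t = 0) {s t : S} {w : M}
    (hsw : ∀ m : M, s • m ∈ span S {w}) (htw : t • w = 0) : t * s = 0 := by
  refine hfaith _ fun m => ?_
  obtain ⟨e, he⟩ := mem_span_singleton.1 (hsw m)
  rw [mul_smul, ← he, smul_comm, htw, smul_zero]

theorem IsYoked.mul_eq_mul_of_smul_eq [IsLeftCancelAdd M] (hS : IsYoked S)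
    (hfaith : ∀ t : S, (∀ x : M, t • x = 0) → t = 0) {s a b : S} {w : M}
    (hsw : ∀ m : M, s • m ∈ span S {w}) (h : a • w = b • w) : s * a = s * b := by
  obtain ⟨t, htw, ht⟩ := hS.exists_smul_eq_zero_of_smul_eq h
  have hts := mul_eq_zero_of_smul_eq_zero_of_forall_smul_mem_span hfaith hsw htw
  rcases ht with ht | ht <;> rw [← ht, mul_add, mul_comm s t, hts, add_zero]

theorem IsYoked.smul_smul_mem_smul_top [IsLeftCancelAdd M] (hS : IsYoked S)
    (hfaith : ∀ t : S, (∀ x : M, t • x = 0) → t = 0) {p : Ideal S} (hp : p.IsPrime)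
    {a s : S} {w x : M} (hsw : ∀ m : M, s • m ∈ span S {w}) (ha : a ∉ p)
    (hax : a • x ∈ p • (⊤ : Submodule S M)) : s • s • x ∈ p • (⊤ : Submodule S M) := by
  obtain ⟨c, hc⟩ := mem_span_singleton.1 (hsw x)
  have hsax : s • a • x ∈ p • span S {w} := by
    have hle : p • (⊤ : Submodule S M) ≤ (p • span S {w}).comap (s • LinearMap.id) :=
      smul_le.2 fun r hr n _ => by simpa [smul_comm s r] using smul_mem_smul hr (hsw n)
    exact hle hax
  obtain ⟨d, hd, hdw⟩ := mem_smul_span_singleton.1 hsax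
  have hacd : s * (a * c) = s * d :=
    hS.mul_eq_mul_of_smul_eq hfaith hsw (by rw [hdw, mul_smul, hc, smul_comm])
  have hsc : s * c ∈ p := by
    refine (hp.mem_or_mem ?_).resolve_left ha
    rw [mul_left_comm, hacd]
    exact p.mul_mem_left s hd
  rw [← hc, smul_smul]
  exact smul_mem_smul hsc mem_top

namespace Module.IsMultiplication

theorem top_le_smul_top (hM : IsMultiplication S M) {q : Ideal S}
    (hq : ∀ (w : M) (s : S), (∀ m : M, s • m ∈ span S {w}) → s ∈ q) :
    (⊤ : Submodule S M) ≤ q • ⊤ := by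
  intro m _
  obtain ⟨I, hI⟩ := hM (span S {m})
  have hIq : I ≤ q := fun u hu => hq m u fun m' => hI ▸ smul_mem_smul hu mem_top
  exact smul_mono_left hIq (hI ▸ mem_span_singleton_self m)

theorem le_smul_of_top_le_smul_top (hM : IsMultiplication S M) {q : Ideal S}
    (hq : (⊤ : Submodule S M) ≤ q • ⊤) (N : Submodule S M) : N ≤ q • N := by
  obtain ⟨I, rfl⟩ := hM N
  calc I • ⊤ ≤ I • q • ⊤ := smul_mono_right _ hq
    _ = q • I • ⊤ := by rw [← Submodule.mul_smul, mul_comm, Submodule.mul_smul]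

end Module.IsMultiplication

theorem Ideal.IsSubtractive.exists_notMem_smul_eq_zero [IsLeftCancelAdd M] (hS : IsYoked S)
    {q : Ideal S} (hsub : q.IsSubtractive) (hq : q ≠ ⊤) {x : M} (hx : x ∈ q • Submodule.span S {x}) :
    ∃ t ∉ q, t • x = 0 := by
  obtain ⟨u, hu, hux⟩ := mem_smul_span_singleton.1 hx
  obtain ⟨t, htx, ht⟩ :=
    hS.exists_smul_eq_zero_of_smul_eq (show (1 : S) • x = u • x by rw [one_smul, hux])
  refine ⟨t, fun htq => hq ((Ideal.eq_top_iff_one q).2 ?_), htx⟩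
  rcases ht with ht | ht
  · exact hsub 1 t (ht ▸ hu) htq
  · exact ht ▸ q.add_mem hu htq

end

/-- Over a yoked semiring with subtractive maximal ideals, for a cancellative
faithful multiplication semimodule M and a prime ideal p:
ax ∈ pM implies a ∈ p or x ∈ pM. -/
theorem mem_prime_or_mem_smul_of_yoked {S M : Type*} [CommSemiring S]
    [AddCommMonoid M] [Module S M]
    (hyoked : ∀ a b : S, ∃ t : S, a + t = b ∨ b + t = a)
    (hsub : ∀ q : Ideal S, q.IsMaximal → ∀ a b : S, a + b ∈ q → b ∈ q → a ∈ q)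
    (hcanc : ∀ m m1 m2 : M, m + m1 = m + m2 → m1 = m2)
    (hfaith : ∀ t : S, (∀ x : M, t • x = 0) → t = 0)
    (hM : ∀ N : Submodule S M, ∃ I : Ideal S, N = I • (⊤ : Submodule S M))
    (p : Ideal S) (hp : p.IsPrime) (a : S) (x : M)
    (hax : a • x ∈ p • (⊤ : Submodule S M)) :
    a ∈ p ∨ x ∈ p • (⊤ : Submodule S M) := by
  have : IsLeftCancelAdd M := ⟨hcanc⟩
  refine or_iff_not_imp_left.2 fun ha => by_contra fun hx => ?_
  set K := (p • (⊤ : Submodule S M)).colon {x}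
  have hK : K ≠ ⊤ := fun h => hx (by simpa [K] using (h ▸ mem_top : (1 : S) ∈ K))
  obtain ⟨q, hq, hKq⟩ := Ideal.exists_le_maximal K hK
  by_cases hcyc : ∃ (w : M) (s : S), s ∉ q ∧ ∀ m : M, s • m ∈ span S {w}
  · obtain ⟨w, s, hs, hsw⟩ := hcyc
    have hss : s * s ∈ K := by
      rw [mem_colon_singleton, mul_smul]
      exact IsYoked.smul_smul_mem_smul_top hyoked hfaith hp hsw ha hax
    exact (hq.isPrime.mem_or_mem (hKq hss)).elim hs hs
  · have hqM : (⊤ : Submodule S M) ≤ q • ⊤ := Module.IsMultiplication.top_le_smul_top hM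
      fun w s hsw => by_contra fun hs => hcyc ⟨w, s, hs, hsw⟩
    have hqx : x ∈ q • span S {x} :=
      Module.IsMultiplication.le_smul_of_top_le_smul_top hM hqM _ (mem_span_singleton_self x)
    obtain ⟨t, htq, htx⟩ :=
      Ideal.IsSubtractive.exists_notMem_smul_eq_zero hyoked (hsub q hq) hq.ne_top hqx
    exact htq (hKq (by rw [mem_colon_singleton, htx]; exact zero_mem _))
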